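/- (Walk-transfer for equal configurations) Suppose Ψ_i(E') = Ψ_i(F') for E', F' ⊆ E_{<i}. Given any directed walk from a vertex of S to a vertex x ∈ W_i in (V, E'∪H) with H ⊆ E_{≥i}, there exists a directed walk from some vertex of S to x in (V, F'∪H). -/

import Mathlib

open scoped Classical
open Finset

noncomputable section

/-- `inc src tgt e x` : edge `e` is incident to vertex `x`. -/
def inc {V : Type*} (src tgt : ℕ → V) (e : ℕ) (x : V) : Prop := src e = x ∨ tgt e = x

/-- Reachability in the subgraph with edge set `A`. -/
def Reach {V : Type*} (src tgt : ℕ → V) (A : Finset ℕ) (x y : V) : Prop :=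
  Relation.ReflTransGen (fun a b => ∃ e ∈ A, src e = a ∧ tgt e = b) x y

/-- `v` is reachable from some vertex of `S` in the subgraph with edge set `A`. -/
def SReach {V : Type*} (src tgt : ℕ → V) (A : Finset ℕ) (S : Finset V) (v : V) : Prop :=
  ∃ s ∈ S, Reach src tgt A s v

/-- Probability that exactly the edges in `X` (among `e_0,…,e_{m-1}`) are present. -/
def prW (p : ℕ → ℝ) (m : ℕ) (X : Finset ℕ) : ℝ :=
  (∏ e ∈ X, p e) * ∏ e ∈ Finset.range m \ X, (1 - p e)

/-- Probability that `v` is reachable from the seed set `S`. -/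
def probReach {V : Type*} (src tgt : ℕ → V) (p : ℕ → ℝ) (m : ℕ) (S : Finset V) (v : V) : ℝ :=
  ∑ X ∈ (Finset.range m).powerset, if SReach src tgt X S v then prW p m X else 0

/-- Conditional probability of `event` given that all edges in `A` are present and
all edges in `B` are absent. -/
def condP (p : ℕ → ℝ) (m : ℕ) (A B : Finset ℕ) (event : Finset ℕ → Prop) : ℝ :=
  (∑ X ∈ (Finset.range m).powerset,
      if A ⊆ X ∧ X ∩ B = ∅ ∧ event X then prW p m X else 0) /
  (∑ X ∈ (Finset.range m).powerset, if A ⊆ X ∧ X ∩ B = ∅ then prW p m X else 0)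

/-- The frontier `W_i`: vertices incident both to an edge of `E_{<i}` and to an edge of
`E_{≥ i}` (as a set). -/
def frontSet {V : Type*} (src tgt : ℕ → V) (m i : ℕ) : Set V :=
  {x | (∃ e ∈ Finset.range i, inc src tgt e x) ∧
       ∃ e ∈ Finset.range m \ Finset.range i, inc src tgt e x}

/-- The frontier `W_i` as a finset. -/
def front {V : Type*} [Fintype V] (src tgt : ℕ → V) (m i : ℕ) : Finset V :=
  Finset.univ.filter fun x =>
    (∃ e ∈ Finset.range i, inc src tgt e x) ∧
    ∃ e ∈ Finset.range m \ Finset.range i, inc src tgt e x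

/-- The shared transversal configuration `Ψ_i(A)`: the set of frontier vertices reachable
from `S`, together with the reachability relation among unreached frontier vertices. -/
def Psi {V : Type*} [Fintype V] (src tgt : ℕ → V) (m : ℕ) (S : Finset V) (i : ℕ)
    (A : Finset ℕ) : Finset V × Finset (V × V) :=
  ((front src tgt m i).filter fun x => SReach src tgt A S x,
   ((front src tgt m i) ×ˢ (front src tgt m i)).filter fun q =>
     ¬ SReach src tgt A S q.1 ∧ Reach src tgt A q.1 q.2)

/-- The transversal configuration `Φ_i^v(A)`: the sets `W_i^{S⇝}`, `W_i^{⇝v}`, the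
reachability matrix on the remaining rows/columns (with extra column `v`), and the
entry `Φ_{S,v}`. -/
def Phi {V : Type*} [Fintype V] (src tgt : ℕ → V) (m : ℕ) (S : Finset V) (i : ℕ) (v : V)
    (A : Finset ℕ) : Finset V × Finset V × Finset (V × V) × Prop :=
  ((front src tgt m i).filter fun x => SReach src tgt A S x,
   (front src tgt m i).filter fun x => Reach src tgt A x v,
   (((front src tgt m i) ∪ {v}) ×ˢ ((front src tgt m i) ∪ {v})).filter fun q =>
     (q.1 ∈ front src tgt m i ∧ ¬ SReach src tgt A S q.1) ∧
     (q.2 = v ∨ (q.2 ∈ front src tgt m i ∧ ¬ Reach src tgt A q.2 v)) ∧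
     Reach src tgt A q.1 q.2,
   SReach src tgt A S v)

/-- Probability that the shared transversal configuration `Ψ` appears at level `i`. -/
def PrPsi {V : Type*} [Fintype V] (src tgt : ℕ → V) (p : ℕ → ℝ) (m : ℕ) (S : Finset V)
    (i : ℕ) (Ψ : Finset V × Finset (V × V)) : ℝ :=
  ∑ A ∈ (Finset.range i).powerset,
    if Psi src tgt m S i A = Ψ then
      (∏ e ∈ A, p e) * ∏ e ∈ Finset.range i \ A, (1 - p e)
    else 0

/-- `IsWalk src tgt A x y es`: `es` is a directed walk from `x` to `y` using edges in `A`. -/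
def IsWalk {V : Type*} (src tgt : ℕ → V) (A : Finset ℕ) : V → V → List ℕ → Prop
  | x, y, [] => x = y
  | x, y, e :: es => e ∈ A ∧ src e = x ∧ IsWalk src tgt A (tgt e) y es


/-! An `E' ∪ H`-walk from `S` to `x` splits at its `H`-edges into `E'`-segments whose
endpoints, apart from the initial vertex in `S`, touch an edge of `E_{≥i}`; so a nonempty segment
ends at a frontier vertex, and starts at one unless it starts in `S`. Segment by segment, the
walk is replaced by `F'`-reachability: through the row `S` of `Ψ_i` when the start of the
segment is reached from `S` in `E'`, and through the row of the start otherwise. -/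

lemma Reach.mono {V : Type*} {src tgt : ℕ → V} {A B : Finset ℕ} (hAB : A ⊆ B) {u x : V}
    (h : Reach src tgt A u x) : Reach src tgt B u x :=
  Relation.ReflTransGen.mono (fun _ _ ⟨e, he, h1, h2⟩ => ⟨e, hAB he, h1, h2⟩) _ _ h

lemma IsWalk.reach {V : Type*} {src tgt : ℕ → V} {A : Finset ℕ} :
    ∀ {u x : V} {es : List ℕ}, IsWalk src tgt A u x es → Reach src tgt A u x
  | _, _, [], rfl => Relation.ReflTransGen.refl
  | _, _, e :: _, ⟨he, hsrc, hes⟩ => Relation.ReflTransGen.head ⟨e, he, hsrc, rfl⟩ hes.reach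

lemma Reach.exists_isWalk {V : Type*} {src tgt : ℕ → V} {A : Finset ℕ} {u x : V}
    (h : Reach src tgt A u x) : ∃ es, IsWalk src tgt A u x es := by
  induction h using Relation.ReflTransGen.head_induction_on with
  | refl => exact ⟨[], rfl⟩
  | head hstep _ ih =>
    obtain ⟨e, he, hsrc, rfl⟩ := hstep
    obtain ⟨es, hes⟩ := ih
    exact ⟨e :: es, he, hsrc, hes⟩

lemma Reach.inc_of_ne {V : Type*} {src tgt : ℕ → V} {A : Finset ℕ} {w u : V}
    (h : Reach src tgt A w u) (hne : w ≠ u) :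
    (∃ e ∈ A, inc src tgt e w) ∧ ∃ e ∈ A, inc src tgt e u := by
  obtain h' | ⟨_, ⟨e, he, hsrc, _⟩, _⟩ := Relation.ReflTransGen.cases_head h
  · exact absurd h' hne
  obtain h' | ⟨_, _, f, hf, _, htgt⟩ := Relation.ReflTransGen.cases_tail h
  · exact absurd h'.symm hne
  exact ⟨⟨e, he, Or.inl hsrc⟩, ⟨f, hf, Or.inr htgt⟩⟩

lemma sReach_of_reach_segment {V : Type*} {src tgt : ℕ → V} {m i : ℕ} {S : Finset V}
    {E' F' B : Finset ℕ} (hE' : E' ⊆ Finset.range i) (hFB : F' ⊆ B)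
    (hR : ∀ y ∈ frontSet src tgt m i, SReach src tgt E' S y → SReach src tgt F' S y)
    (hM : ∀ u ∈ frontSet src tgt m i, ∀ y ∈ frontSet src tgt m i,
      ¬ SReach src tgt E' S u → Reach src tgt E' u y → Reach src tgt F' u y)
    {w u : V} (hw : w ∈ S ∨ SReach src tgt B S w ∧
      ∃ e ∈ Finset.range m \ Finset.range i, inc src tgt e w)
    (hwu : Reach src tgt E' w u) (hu : ∃ e ∈ Finset.range m \ Finset.range i, inc src tgt e u) :
    SReach src tgt B S u := by
  rcases eq_or_ne w u with rfl | hne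
  · rcases hw with hwS | ⟨hwB, _⟩
    exacts [⟨w, hwS, Relation.ReflTransGen.refl⟩, hwB]
  obtain ⟨⟨e, he, hwe⟩, ⟨f, hf, huf⟩⟩ := hwu.inc_of_ne hne
  have huW : u ∈ frontSet src tgt m i := ⟨⟨f, hE' hf, huf⟩, hu⟩
  have of_sReach_E' : SReach src tgt E' S u → SReach src tgt B S u := fun h => by
    obtain ⟨t, ht, htu⟩ := hR u huW h
    exact ⟨t, ht, htu.mono hFB⟩
  rcases hw with hwS | ⟨⟨t, ht, htw⟩, hw⟩
  · exact of_sReach_E' ⟨w, hwS, hwu⟩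
  by_cases hwE' : SReach src tgt E' S w
  · obtain ⟨s, hs, hsw⟩ := hwE'
    exact of_sReach_E' ⟨s, hs, hsw.trans hwu⟩
  · have hwW : w ∈ frontSet src tgt m i := ⟨⟨e, hE' he, hwe⟩, hw⟩
    exact ⟨t, ht, htw.trans ((hM w hwW u huW hwE' hwu).mono hFB)⟩

lemma exists_segment_of_reach_union {V : Type*} {src tgt : ℕ → V} {m i : ℕ} {S : Finset V}
    {E' F' H : Finset ℕ} (hE' : E' ⊆ Finset.range i)
    (hR : ∀ y ∈ frontSet src tgt m i, SReach src tgt E' S y → SReach src tgt F' S y)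
    (hM : ∀ u ∈ frontSet src tgt m i, ∀ y ∈ frontSet src tgt m i,
      ¬ SReach src tgt E' S u → Reach src tgt E' u y → Reach src tgt F' u y)
    (hH : H ⊆ Finset.range m \ Finset.range i) {s u : V} (hs : s ∈ S)
    (h : Reach src tgt (E' ∪ H) s u) :
    ∃ w, (w ∈ S ∨ SReach src tgt (F' ∪ H) S w ∧
      ∃ e ∈ Finset.range m \ Finset.range i, inc src tgt e w) ∧ Reach src tgt E' w u := by
  induction h with
  | refl => exact ⟨s, Or.inl hs, Relation.ReflTransGen.refl⟩
  | tail _ hstep ih =>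
    obtain ⟨e, he, hsrc, rfl⟩ := hstep
    obtain ⟨w, hw, hwu⟩ := ih
    rcases Finset.mem_union.1 he with heE' | heH
    · exact ⟨w, hw, hwu.tail ⟨e, heE', hsrc, rfl⟩⟩
    obtain ⟨t, ht, htu⟩ := sReach_of_reach_segment hE' Finset.subset_union_left hR hM hw hwu
      ⟨e, hH heH, Or.inl hsrc⟩
    exact ⟨tgt e, Or.inr ⟨⟨t, ht, htu.tail ⟨e, Finset.mem_union_right _ heH, hsrc, rfl⟩⟩,
      e, hH heH, Or.inr rfl⟩, Relation.ReflTransGen.refl⟩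

theorem stmt19_general {V : Type*} (src tgt : ℕ → V) (m : ℕ) (S : Finset V)
    (i : ℕ) (E' F' : Finset ℕ)
    (hE' : E' ⊆ Finset.range i)
    (hR : ∀ y ∈ frontSet src tgt m i,
      (SReach src tgt E' S y ↔ SReach src tgt F' S y))
    (hM : ∀ u ∈ frontSet src tgt m i, ∀ y ∈ frontSet src tgt m i,
      ¬ SReach src tgt E' S u → (Reach src tgt E' u y ↔ Reach src tgt F' u y))
    (x : V) (hx : x ∈ frontSet src tgt m i)
    (H : Finset ℕ) (hH : H ⊆ Finset.range m \ Finset.range i)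
    (s : V) (hs : s ∈ S) (es : List ℕ) (hwalk : IsWalk src tgt (E' ∪ H) s x es) :
    ∃ s' ∈ S, ∃ es' : List ℕ, IsWalk src tgt (F' ∪ H) s' x es' := by
  have hR' := fun y hy => (hR y hy).1
  have hM' := fun u hu y hy hnot => (hM u hu y hy hnot).1
  obtain ⟨w, hw, hwx⟩ := exists_segment_of_reach_union hE' hR' hM' hH hs hwalk.reach
  obtain ⟨s', hs', hs'x⟩ :=
    sReach_of_reach_segment hE' Finset.subset_union_left hR' hM' hw hwx hx.2
  exact ⟨s', hs', hs'x.exists_isWalk⟩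

/-- Walk transfer for equal shared transversal configurations: any walk from `S` to a
frontier vertex `x` in `(V, E' ∪ H)` can be transferred to a walk from `S` to `x` in
`(V, F' ∪ H)`. -/
theorem stmt19 {V : Type*} (src tgt : ℕ → V) (m : ℕ) (S : Finset V)
    (i : ℕ) (him : i ≤ m) (E' F' : Finset ℕ)
    (hE' : E' ⊆ Finset.range i) (hF' : F' ⊆ Finset.range i)
    (hR : ∀ y ∈ frontSet src tgt m i,
      (SReach src tgt E' S y ↔ SReach src tgt F' S y))
    (hM : ∀ u ∈ frontSet src tgt m i, ∀ y ∈ frontSet src tgt m i,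
      ¬ SReach src tgt E' S u → (Reach src tgt E' u y ↔ Reach src tgt F' u y))
    (x : V) (hx : x ∈ frontSet src tgt m i)
    (H : Finset ℕ) (hH : H ⊆ Finset.range m \ Finset.range i)
    (s : V) (hs : s ∈ S) (es : List ℕ) (hwalk : IsWalk src tgt (E' ∪ H) s x es) :
    ∃ s' ∈ S, ∃ es' : List ℕ, IsWalk src tgt (F' ∪ H) s' x es' :=
  stmt19_general src tgt m S i E' F' hE' hR hM x hx H hH s hs es hwalk

end
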